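/- If S is a p'-valenced association scheme, i.e. p ∤ k_i for all 0 ≤ i ≤ d, then S is a p-transitive scheme. -/
import Mathlib


open scoped Classical

/-- An association scheme of class `d` on a nonempty finite set `X`:
a partition of `X × X` into nonempty relations `r 0, …, r d` with
`r 0` the diagonal, closed under converse (`star`), and with
intersection numbers `pNum i j k`. -/
structure AssocScheme (X : Type*) [Fintype X] [Nonempty X] (d : ℕ) where
  r : Fin (d + 1) → Set (X × X)
  r_nonempty : ∀ i, (r i).Nonempty
  existsUnique_rel : ∀ q : X × X, ∃! i, q ∈ r i
  r_zero : r 0 = {q : X × X | q.1 = q.2}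
  star : Fin (d + 1) → Fin (d + 1)
  mem_star : ∀ (i : Fin (d + 1)) (q : X × X), q ∈ r (star i) ↔ (q.2, q.1) ∈ r i
  pNum : Fin (d + 1) → Fin (d + 1) → Fin (d + 1) → ℕ
  ncard_eq : ∀ (i j k : Fin (d + 1)), ∀ q ∈ r k,
    {z : X | (q.1, z) ∈ r i ∧ (z, q.2) ∈ r j}.ncard = pNum i j k

namespace AssocScheme

variable {X : Type*} [Fintype X] [Nonempty X] {d : ℕ}

/-- The valency `k_i = p_{i i*}^0` of the relation `R_i`. -/
def val (S : AssocScheme X d) (i : Fin (d + 1)) : ℕ := S.pNum i (S.star i) 0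

/-- The complex product `UV = {R_k : p_{uv}^k > 0 for some R_u ∈ U, R_v ∈ V}`. -/
def cmul (S : AssocScheme X d) (U V : Set (Fin (d + 1))) : Set (Fin (d + 1)) :=
  {k | ∃ u ∈ U, ∃ v ∈ V, 0 < S.pNum u v k}

/-- A nonempty subset `T` is closed if `T*T ⊆ T`. -/
def IsClosedSubset (S : AssocScheme X d) (T : Set (Fin (d + 1))) : Prop :=
  T.Nonempty ∧ S.cmul (S.star '' T) T ⊆ T

/-- The thin radical `O_ϑ(S) = {R_i : k_i = 1}`. -/
def thinRadical (S : AssocScheme X d) : Set (Fin (d + 1)) := {i | S.val i = 1}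

/-- A closed subset `T` is strongly normal if `R_{i*} T R_i ⊆ T` for all `i`. -/
def IsStronglyNormal (S : AssocScheme X d) (T : Set (Fin (d + 1))) : Prop :=
  S.IsClosedSubset T ∧ ∀ i : Fin (d + 1), S.cmul (S.cmul {S.star i} T) {i} ⊆ T

/-- The thin residue `O^ϑ(S)`: the intersection of all strongly normal closed subsets. -/
def thinResidue (S : AssocScheme X d) : Set (Fin (d + 1)) :=
  ⋂₀ {T | S.IsStronglyNormal T}

/-- `⟨H⟩`: the intersection of all closed subsets containing `H`. -/
def closure (S : AssocScheme X d) (H : Set (Fin (d + 1))) : Set (Fin (d + 1)) :=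
  ⋂₀ {T | S.IsClosedSubset T ∧ H ⊆ T}

/-- The adjacency matrix `A̅_i` of `R_i`, with entries in `𝔽`. -/
noncomputable def adj (S : AssocScheme X d) (𝔽 : Type*) [Field 𝔽] (i : Fin (d + 1)) :
    Matrix X X 𝔽 :=
  Matrix.of fun x y => if (x, y) ∈ S.r i then 1 else 0

/-- `v` spans a trivial `𝔽S`-submodule of the regular `𝔽S`-module:
`v` is a nonzero element of `𝔽S` with `A̅_i v = k̅_i v` for all `i`. -/
def IsTrivialVector (S : AssocScheme X d) (𝔽 : Type*) [Field 𝔽] (v : Matrix X X 𝔽) : Prop :=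
  v ≠ 0 ∧ v ∈ Submodule.span 𝔽 (Set.range (S.adj 𝔽)) ∧
    ∀ i : Fin (d + 1), S.adj 𝔽 i * v = (S.val i : 𝔽) • v

/-- `S` is `p`-transitive over `𝔽` (of characteristic `p`) if the regular `𝔽S`-module
contains a unique trivial `𝔽S`-submodule. -/
def IsPTransitive (S : AssocScheme X d) (𝔽 : Type*) [Field 𝔽] : Prop :=
  ∃! W : Submodule 𝔽 (Matrix X X 𝔽),
    ∃ v : Matrix X X 𝔽, S.IsTrivialVector 𝔽 v ∧ W = Submodule.span 𝔽 {v}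

/-- A subset `T ⊆ S` is singular if `O_ϑ(S) ⊆ T` and
`R_x R_{y*} R_y R_z ⊆ T` for all `R_x ∈ O_ϑ(S)`, `R_y ∈ S`, `R_z ∈ T`. -/
def IsSingular (S : AssocScheme X d) (T : Set (Fin (d + 1))) : Prop :=
  S.thinRadical ⊆ T ∧ ∀ x ∈ S.thinRadical, ∀ y : Fin (d + 1), ∀ z ∈ T,
    S.cmul (S.cmul (S.cmul {x} {S.star y}) {y}) {z} ⊆ T

/-- `S_{p'} = {R_i ∈ S : p ∤ k_i}`. -/
def pPrimePart (S : AssocScheme X d) (p : ℕ) : Set (Fin (d + 1)) :=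
  {i | ¬ p ∣ S.val i}

end AssocScheme

namespace AssocScheme

variable {X : Type*} [Fintype X] [Nonempty X] {d : ℕ} (S : AssocScheme X d)

lemma rel_unique {i j : Fin (d + 1)} {q : X × X} (hi : q ∈ S.r i) (hj : q ∈ S.r j) : i = j :=
  (S.existsUnique_rel q).unique hi hj

lemma star_star (i : Fin (d + 1)) : S.star (S.star i) = i := by
  obtain ⟨q, hq⟩ := S.r_nonempty i
  have h1 : (q.2, q.1) ∈ S.r (S.star i) := (S.mem_star i (q.2, q.1)).mpr (by simpa using hq)
  have h2 : q ∈ S.r (S.star (S.star i)) := (S.mem_star (S.star i) q).mpr h1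
  exact S.rel_unique h2 hq

lemma diag_mem (x : X) : ((x, x) : X × X) ∈ S.r 0 := by rw [S.r_zero]; simp

lemma card_row (i : Fin (d + 1)) (x : X) :
    (Finset.univ.filter fun z => (x, z) ∈ S.r i).card = S.val i := by
  have h := S.ncard_eq i (S.star i) 0 (x, x) (S.diag_mem x)
  have hs : {z : X | ((x, x).1, z) ∈ S.r i ∧ (z, (x, x).2) ∈ S.r (S.star i)}
      = {z : X | (x, z) ∈ S.r i} := by
    ext z
    simp only [Set.mem_setOf_eq]
    exact ⟨fun h => h.1, fun hz => ⟨hz, (S.mem_star i (z, x)).mpr hz⟩⟩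
  rw [hs] at h
  rw [AssocScheme.val, ← h, Set.ncard_eq_toFinset_card']
  congr 1
  ext z
  simp

end AssocScheme

/-- A `p'`-valenced scheme (`p ∤ k_i` for all `i`) is `p`-transitive. -/
theorem isPTransitive_of_pPrimeValenced
    {X : Type*} [Fintype X] [Nonempty X] {d : ℕ} (S : AssocScheme X d)
    (𝔽 : Type*) [Field 𝔽] (p : ℕ) [Fact p.Prime] [CharP 𝔽 p]
    (h : ∀ i : Fin (d + 1), ¬ p ∣ S.val i) :
    S.IsPTransitive 𝔽 := by
  classical
  set J : Matrix X X 𝔽 := Matrix.of fun _ _ => 1 with hJdef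
  have hk : ∀ i, (S.val i : 𝔽) ≠ 0 := fun i hi => h i ((CharP.cast_eq_zero_iff 𝔽 p _).mp hi)
  have hrow : ∀ (i : Fin (d + 1)) (x : X),
      (∑ z : X, if (x, z) ∈ S.r i then (1 : 𝔽) else 0) = (S.val i : 𝔽) := by
    intro i x
    rw [Finset.sum_boole, S.card_row i x]
  have hsum : ∑ i, S.adj 𝔽 i = J := by
    ext x y
    obtain ⟨i0, hi0, hun⟩ := S.existsUnique_rel (x, y)
    simp only [Matrix.sum_apply, AssocScheme.adj, Matrix.of_apply, hJdef]
    rw [Finset.sum_eq_single i0]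
    · simp [hi0]
    · intro b _ hb
      simp only [ite_eq_right_iff]
      intro hbmem
      exact absurd (S.rel_unique hbmem hi0) hb
    · simp
  have hJtriv : S.IsTrivialVector 𝔽 J := by
    refine ⟨?_, ?_, ?_⟩
    · intro h0
      have := congrFun (congrFun h0 (Classical.arbitrary X)) (Classical.arbitrary X)
      simp [hJdef] at this
    · rw [← hsum]
      exact Submodule.sum_mem _ fun i _ => Submodule.subset_span ⟨i, rfl⟩
    · intro i
      ext x y
      simp only [Matrix.mul_apply, AssocScheme.adj, Matrix.of_apply, Matrix.smul_apply,
        smul_eq_mul, hJdef, mul_one]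
      rw [hrow i x]
  have key : ∀ v : Matrix X X 𝔽, S.IsTrivialVector 𝔽 v → ∃ c : 𝔽, c ≠ 0 ∧ v = c • J := by
    rintro v ⟨hv0, hvspan, hveq⟩
    obtain ⟨c, hc⟩ := (Submodule.mem_span_range_iff_exists_fun 𝔽).mp hvspan
    have hentry : ∀ (x y : X) (i : Fin (d + 1)), (x, y) ∈ S.r i → v x y = c i := by
      intro x y i hi
      rw [← hc]
      simp only [Finset.sum_apply, Matrix.sum_apply, Matrix.smul_apply, AssocScheme.adj,
        Matrix.of_apply, smul_eq_mul]
      rw [Finset.sum_eq_single i]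
      · simp [hi]
      · intro b _ hb
        suffices hmem : (x, y) ∉ S.r b by simp [hmem]
        exact fun hbmem => hb (S.rel_unique hbmem hi)
      · simp
    have hc0 : ∀ i, c (S.star i) = c 0 := by
      intro i
      have x := Classical.arbitrary X
      have heq := congrFun (congrFun (hveq i) x) x
      have hL : (S.adj 𝔽 i * v) x x = (S.val i : 𝔽) * c (S.star i) := by
        rw [Matrix.mul_apply]
        have hterm : ∀ z : X, (S.adj 𝔽 i) x z * v z x
            = (if (x, z) ∈ S.r i then (1 : 𝔽) else 0) * c (S.star i) := by
          intro z
          simp only [AssocScheme.adj, Matrix.of_apply]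
          by_cases hz : (x, z) ∈ S.r i
          · simp [hz, hentry z x (S.star i) ((S.mem_star i (z, x)).mpr hz)]
          · simp [hz]
        rw [Finset.sum_congr rfl fun z _ => hterm z, ← Finset.sum_mul, hrow i x]
      have hR : ((S.val i : 𝔽) • v) x x = (S.val i : 𝔽) * c 0 := by
        simp only [Matrix.smul_apply, smul_eq_mul]
        rw [hentry x x 0 (S.diag_mem x)]
      rw [hL, hR] at heq
      exact mul_left_cancel₀ (hk i) heq
    have hcall : ∀ j, c j = c 0 := fun j => by
      have := hc0 (S.star j)
      rwa [S.star_star j] at this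
    refine ⟨c 0, ?_, ?_⟩
    · intro hz
      apply hv0
      ext x y
      obtain ⟨i0, hi0, -⟩ := S.existsUnique_rel (x, y)
      rw [hentry x y i0 hi0, hcall i0, hz]
      rfl
    · ext x y
      obtain ⟨i0, hi0, -⟩ := S.existsUnique_rel (x, y)
      rw [hentry x y i0 hi0, hcall i0]
      simp [hJdef]
  refine ⟨Submodule.span 𝔽 {J}, ⟨J, hJtriv, rfl⟩, ?_⟩
  rintro W ⟨v, hv, rfl⟩
  obtain ⟨c, hc0, hvc⟩ := key v hv
  rw [hvc]
  exact Submodule.span_singleton_smul_eq (IsUnit.mk0 c hc0) _
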